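/- arXiv:1212.4299 — 5 statements merged into one kernel-verified Lean document; each statement's English description precedes it below -/
import Mathlib

section
/- For nonnegative integers m1 ≥ 1 and m2, the Humbert-Bessel function satisfies the recurrence m1 · I_{m1,m2}(x) = I_{m1-1,m2}(x) − x · I_{m1+1,m2+1}(x). -/
/-- Two-index Humbert-Bessel function. -/
noncomputable def humbert (m1 m2 : ℕ) (x : ℝ) : ℝ :=
  ∑' r : ℕ, x ^ r / (r.factorial * (m1 + r).factorial * (m2 + r).factorial)

/-!
Write `a r` for the `r`-th term of `I_{m1,m2}(x)`. Since `(m1 - 1 + r)! = (m1 + r)! / (m1 + r)`,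
the series of `I_{m1-1,m2}` is `∑ (m1 + r) a r = m1 I_{m1,m2} + ∑ r a r`, and shifting the index
in `∑ r a r` turns it into `x I_{m1+1,m2+1}`.
-/

open Nat

noncomputable def humbertTerm (m1 m2 : ℕ) (x : ℝ) (r : ℕ) : ℝ :=
  x ^ r / (r ! * (m1 + r)! * (m2 + r)!)

lemma summable_humbertTerm (m1 m2 : ℕ) (x : ℝ) : Summable (humbertTerm m1 m2 x) := by
  refine (Real.summable_pow_div_factorial |x|).of_norm_bounded fun r => ?_
  rw [humbertTerm, norm_div, norm_pow, Real.norm_eq_abs, Real.norm_of_nonneg (by positivity),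
    mul_assoc]
  have hfactorials : (1 : ℝ) ≤ (m1 + r)! * (m2 + r)! := by
    exact_mod_cast Nat.one_le_iff_ne_zero.mpr (by positivity)
  gcongr
  exact le_mul_of_one_le_right (by positivity) hfactorials

lemma humbertTerm_eq_mul_humbertTerm_succ (n m2 : ℕ) (x : ℝ) (r : ℕ) :
    humbertTerm n m2 x r = (n + 1 + r) * humbertTerm (n + 1) m2 x r := by
  rw [humbertTerm, humbertTerm, Nat.add_right_comm n 1 r, factorial_succ]
  push_cast
  field_simp
  ring

lemma succ_mul_humbertTerm_succ (m1 m2 : ℕ) (x : ℝ) (s : ℕ) :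
    (s + 1) * humbertTerm m1 m2 x (s + 1) = x * humbertTerm (m1 + 1) (m2 + 1) x s := by
  rw [humbertTerm, humbertTerm, ← add_assoc, ← add_assoc, Nat.add_right_comm m1,
    Nat.add_right_comm m2, factorial_succ s]
  push_cast
  field_simp
  ring

lemma hasSum_mul_humbertTerm (m1 m2 : ℕ) (x : ℝ) :
    HasSum (fun r => r * humbertTerm m1 m2 x r) (x * humbert (m1 + 1) (m2 + 1) x) := by
  rw [← hasSum_nat_add_iff' 1]
  simp only [Finset.sum_range_one, Nat.cast_zero, zero_mul, sub_zero, Nat.cast_succ,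
    succ_mul_humbertTerm_succ]
  exact (summable_humbertTerm _ _ x).hasSum.mul_left x

lemma humbert_eq_mul_humbert_succ_add (n m2 : ℕ) (x : ℝ) :
    humbert n m2 x = (n + 1) * humbert (n + 1) m2 x + x * humbert (n + 2) (m2 + 1) x := by
  have hsum := ((summable_humbertTerm (n + 1) m2 x).hasSum.mul_left ((n : ℝ) + 1)).add
    (hasSum_mul_humbertTerm (n + 1) m2 x)
  simp only [← add_mul, ← humbertTerm_eq_mul_humbertTerm_succ] at hsum
  exact hsum.tsum_eq

theorem humbert_recurrence (m1 m2 : ℕ) (hm1 : 1 ≤ m1) (x : ℝ) :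
    (m1 : ℝ) * humbert m1 m2 x =
      humbert (m1 - 1) m2 x - x * humbert (m1 + 1) (m2 + 1) x := by
  obtain ⟨n, rfl⟩ := Nat.exists_eq_add_of_le' hm1
  rw [Nat.add_sub_cancel, humbert_eq_mul_humbert_succ_add n m2 x]
  push_cast
  ring
end

section
/- The Humbert-Bessel function z(x) = I_{m1,m2}(x) satisfies the third-order ODE x²·z''' + (m1+m2+3)·x·z'' + (m1+1)(m2+1)·z' − z = 0 for all real x. -/
open scoped Nat

theorem summable_mul_pow_of_abs_le_inv_factorial {c : ℕ → ℝ} (hc : ∀ n, |c n| ≤ (n ! : ℝ)⁻¹)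
    (x : ℝ) : Summable fun n ↦ c n * x ^ n := by
  refine .of_norm_bounded (Real.summable_pow_div_factorial |x|) fun n ↦ ?_
  rw [norm_mul, norm_pow, Real.norm_eq_abs, Real.norm_eq_abs, div_eq_inv_mul]
  gcongr
  exact hc n

theorem hasDerivAt_tsum_mul_pow_of_abs_le_inv_factorial {c : ℕ → ℝ}
    (hc : ∀ n, |c n| ≤ (n ! : ℝ)⁻¹) (x : ℝ) :
    HasDerivAt (fun y ↦ ∑' n, c n * y ^ n) (∑' n, (n + 1) * c (n + 1) * x ^ n) x := by
  set R : ℝ := |x| + 1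
  set u : ℕ → ℝ := fun n ↦ (n ! : ℝ)⁻¹ * (n * R ^ (n - 1))
  have hu : Summable u := by
    rw [← summable_nat_add_iff 1]
    refine (Real.summable_pow_div_factorial R).congr fun n ↦ ?_
    simp only [u, Nat.add_sub_cancel, Nat.factorial_succ]
    push_cast
    field_simp
  have hbound : ∀ n, ∀ y ∈ Metric.ball (0 : ℝ) R, ‖c n * (n * y ^ (n - 1))‖ ≤ u n := by
    intro n y hy
    rw [mem_ball_zero_iff, Real.norm_eq_abs] at hy
    rw [Real.norm_eq_abs, abs_mul, abs_mul, abs_pow, Nat.abs_cast]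
    unfold u
    gcongr
    exact hc n
  have hx : x ∈ Metric.ball (0 : ℝ) R := by simp [R]
  have H := hasDerivAt_tsum_of_isPreconnected hu Metric.isOpen_ball
    (convex_ball (0 : ℝ) R).isPreconnected (fun n y _ ↦ (hasDerivAt_pow n y).const_mul (c n))
    hbound (Metric.mem_ball_self (by positivity)) (summable_mul_pow_of_abs_le_inv_factorial hc 0) hx
  refine H.congr_deriv ?_
  rw [(Summable.of_norm_bounded hu fun n ↦ hbound n x hx).tsum_eq_zero_add]
  simp only [Nat.cast_zero, zero_mul, mul_zero, zero_add, Nat.add_sub_cancel, Nat.cast_succ]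
  exact tsum_congr fun n ↦ by ring

noncomputable def humbertCoeff (m1 m2 r : ℕ) : ℝ := (r ! * (m1 + r)! * (m2 + r)! : ℝ)⁻¹

theorem humbert_eq_tsum (m1 m2 : ℕ) :
    humbert m1 m2 = fun x ↦ ∑' r, humbertCoeff m1 m2 r * x ^ r := by
  funext x
  exact tsum_congr fun r ↦ div_eq_inv_mul _ _

theorem abs_humbertCoeff_le (m1 m2 r : ℕ) : |humbertCoeff m1 m2 r| ≤ (r ! : ℝ)⁻¹ := by
  rw [humbertCoeff, abs_of_nonneg (by positivity)]
  gcongr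
  calc (r ! : ℝ) = r ! * 1 * 1 := by ring
    _ ≤ r ! * (m1 + r)! * (m2 + r)! := by
      gcongr <;> exact_mod_cast Nat.one_le_iff_ne_zero.2 (Nat.factorial_ne_zero _)

theorem hasSum_humbert (m1 m2 : ℕ) (x : ℝ) :
    HasSum (fun r ↦ humbertCoeff m1 m2 r * x ^ r) (humbert m1 m2 x) := by
  rw [humbert_eq_tsum]
  exact (summable_mul_pow_of_abs_le_inv_factorial (abs_humbertCoeff_le m1 m2) x).hasSum

theorem descFactorial_mul_humbertCoeff (m1 m2 r j : ℕ) :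
    ((r + j).descFactorial j : ℝ) * humbertCoeff m1 m2 (r + j)
      = humbertCoeff (m1 + j) (m2 + j) r := by
  have h := Nat.factorial_mul_descFactorial (Nat.le_add_left j r)
  rw [Nat.add_sub_cancel] at h
  simp only [humbertCoeff, ← h, show m1 + j + r = m1 + (r + j) by omega,
    show m2 + j + r = m2 + (r + j) by omega]
  have : ((r + j).descFactorial j : ℝ) ≠ 0 := by
    exact_mod_cast (Nat.descFactorial_pos.2 (Nat.le_add_left j r)).ne'
  push_cast
  field_simp

theorem hasDerivAt_humbert (m1 m2 : ℕ) (x : ℝ) :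
    HasDerivAt (humbert m1 m2) (humbert (m1 + 1) (m2 + 1) x) x := by
  rw [humbert_eq_tsum, humbert_eq_tsum]
  convert hasDerivAt_tsum_mul_pow_of_abs_le_inv_factorial (abs_humbertCoeff_le m1 m2) x using 3
  rw [← descFactorial_mul_humbertCoeff]
  simp

theorem iteratedDeriv_humbert (m1 m2 k : ℕ) :
    iteratedDeriv k (humbert m1 m2) = humbert (m1 + k) (m2 + k) := by
  induction k with
  | zero => rfl
  | succ k ih =>
    funext x
    rw [iteratedDeriv_succ, ih, (hasDerivAt_humbert _ _ x).deriv]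
    rfl

theorem hasSum_pow_mul_humbert (m1 m2 j : ℕ) (x : ℝ) :
    HasSum (fun s ↦ (s.descFactorial j : ℝ) * humbertCoeff m1 m2 s * x ^ s)
      (x ^ j * humbert (m1 + j) (m2 + j) x) := by
  have h := (hasSum_humbert (m1 + j) (m2 + j) x).mul_left (x ^ j)
  have h_low : ∀ s ∈ Finset.range j,
      (s.descFactorial j : ℝ) * humbertCoeff m1 m2 s * x ^ s = 0 := fun s hs ↦ by
    rw [Nat.descFactorial_eq_zero_iff_lt.2 (Finset.mem_range.1 hs)]
    simp
  rw [← hasSum_nat_add_iff' j, Finset.sum_eq_zero h_low, sub_zero]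
  refine h.congr_fun fun r ↦ ?_
  rw [← descFactorial_mul_humbertCoeff]
  ring

theorem humbertCoeff_eq_mul_humbertCoeff_succ (m1 m2 s : ℕ) :
    humbertCoeff m1 m2 s = (m1 + s + 1) * (m2 + s + 1) * humbertCoeff (m1 + 1) (m2 + 1) s := by
  simp only [humbertCoeff, show m1 + 1 + s = m1 + s + 1 by omega,
    show m2 + 1 + s = m2 + s + 1 by omega, Nat.factorial_succ]
  push_cast
  field_simp

theorem humbert_ode (m1 m2 : ℕ) (x : ℝ) :
    x ^ 2 * iteratedDeriv 3 (humbert m1 m2) x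
      + ((m1 : ℝ) + m2 + 3) * x * iteratedDeriv 2 (humbert m1 m2) x
      + ((m1 : ℝ) + 1) * ((m2 : ℝ) + 1) * deriv (humbert m1 m2) x
      - humbert m1 m2 x = 0 := by
  rw [iteratedDeriv_humbert, iteratedDeriv_humbert, (hasDerivAt_humbert m1 m2 x).deriv]
  have h_series :=
    (((hasSum_pow_mul_humbert (m1 + 1) (m2 + 1) 2 x).add
      ((hasSum_pow_mul_humbert (m1 + 1) (m2 + 1) 1 x).mul_left ((m1 : ℝ) + m2 + 3))).add
      ((hasSum_pow_mul_humbert (m1 + 1) (m2 + 1) 0 x).mul_left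
        (((m1 : ℝ) + 1) * ((m2 : ℝ) + 1)))).sub (hasSum_humbert m1 m2 x)
  have h_indicial (s : ℕ) : (s.descFactorial 2 : ℝ) + (m1 + m2 + 3) * s.descFactorial 1
      + (m1 + 1) * (m2 + 1) * s.descFactorial 0 = (m1 + s + 1) * (m2 + s + 1) := by
    rw [Nat.cast_descFactorial_two, Nat.descFactorial_one, Nat.descFactorial_zero]
    push_cast
    ring
  have h_zero := h_series.unique (hasSum_zero.congr_fun fun s ↦ ?_)
  · linear_combination h_zero
  · linear_combination humbertCoeff (m1 + 1) (m2 + 1) s * x ^ s * h_indicial s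
      - x ^ s * humbertCoeff_eq_mul_humbertCoeff_succ m1 m2 s
end

section
/- The function y(x) = I_0(3,x) = ∑_{r=0}^∞ (x/3)^{3r}/(r!)³ satisfies the ODE x²·y''' + 3x·y'' + y' − x²·y = 0. -/
/-!
The operator `L = x² D³ + 3x D² + D` is `x⁻¹ θ³` for `θ = x d/dx`, so `L xⁿ = n³ xⁿ⁻¹`. Hence `L`
kills the constant term of the series and sends its `(r+1)`-st term to `x²` times its `r`-th term.
Termwise differentiation is justified because on `|x| ≤ R` the `k`-th derivative of the `r`-th
term is at most `k! (8R³/27)ʳ / r!`.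
-/

/-- Re-modified Bessel function of order 0 with parameter 3. -/
noncomputable def remod3 (x : ℝ) : ℝ :=
  ∑' r : ℕ, (x / 3) ^ (3 * r) / (r.factorial : ℝ) ^ 3

open scoped Nat

theorem iteratedDeriv_tsum_of_norm_le {ι 𝕜 F : Type*} [RCLike 𝕜] [NormedAddCommGroup F]
    [NormedSpace 𝕜 F] [CompleteSpace F] {f : ι → 𝕜 → F} (m : ℕ)
    (hf : ∀ i, ContDiff 𝕜 (m + 1) (f i))
    (hu : ∀ k ≤ m, ∀ R : ℝ, ∃ u : ι → ℝ, Summable u ∧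
      ∀ i x, ‖x‖ ≤ R → ‖iteratedDeriv k (f i) x‖ ≤ u i)
    (x : 𝕜) :
    iteratedDeriv m (fun z ↦ ∑' i, f i z) x = ∑' i, iteratedDeriv m (f i) x := by
  simp only [← iteratedDerivWithin_univ]
  refine iteratedDerivWithin_tsum m isOpen_univ (Set.mem_univ x) (fun t _ ↦ ?_)
    (fun k _ hkm ↦ ?_) (fun i k t hkm _ ↦ ?_)
  · obtain ⟨u, hu, hbound⟩ := hu 0 (Nat.zero_le m) ‖t‖
    exact hu.of_norm_bounded fun i ↦ by simpa using hbound i t le_rfl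
  · simp only [iteratedDerivWithin_univ]
    refine SummableLocallyUniformlyOn_of_locally_bounded isOpen_univ fun K _ hK ↦ ?_
    obtain ⟨R, hR⟩ := hK.isBounded.subset_closedBall 0
    obtain ⟨u, hu, hbound⟩ := hu k hkm R
    exact ⟨u, hu, fun i y hy ↦ hbound i y (by simpa using hR hy)⟩
  · rw [iteratedDerivWithin_univ]
    exact (hf i).differentiable_iteratedDeriv k (by exact_mod_cast Nat.lt_succ_of_le hkm) t

noncomputable def remod3Term (r : ℕ) (x : ℝ) : ℝ :=
  (x / 3) ^ (3 * r) / (r ! : ℝ) ^ 3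

lemma remod3Term_eq (r : ℕ) :
    remod3Term r = fun x ↦ x ^ (3 * r) / (27 ^ r * (r ! : ℝ) ^ 3) := by
  ext x
  rw [remod3Term, div_pow, div_div, pow_mul 3 3 r]
  norm_num

lemma iteratedDeriv_remod3Term (k r : ℕ) (x : ℝ) :
    iteratedDeriv k (remod3Term r) x
      = (3 * r).descFactorial k * x ^ (3 * r - k) / (27 ^ r * (r ! : ℝ) ^ 3) := by
  rw [remod3Term_eq, iteratedDeriv_div_const, iteratedDeriv_pow]

lemma norm_iteratedDeriv_remod3Term_le (k r : ℕ) {R : ℝ} (hR : 1 ≤ R) {x : ℝ} (hx : ‖x‖ ≤ R) :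
    ‖iteratedDeriv k (remod3Term r) x‖ ≤ k ! * ((8 * R ^ 3 / 27) ^ r / r !) := by
  have hdesc : ((3 * r).descFactorial k : ℝ) ≤ k ! * 2 ^ (3 * r) := by
    rw [Nat.descFactorial_eq_factorial_mul_choose]
    exact_mod_cast Nat.mul_le_mul_left _ (Nat.choose_le_two_pow _ _)
  have hpow : ‖x‖ ^ (3 * r - k) ≤ R ^ (3 * r) :=
    (pow_le_pow_left₀ (norm_nonneg x) hx _).trans (pow_le_pow_right₀ hR (Nat.sub_le _ _))
  have hfac : (r ! : ℝ) ≤ (r ! : ℝ) ^ 3 :=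
    le_self_pow₀ (by exact_mod_cast r.factorial_pos) (by norm_num)
  rw [iteratedDeriv_remod3Term, norm_div, norm_mul, norm_pow, Real.norm_natCast,
    Real.norm_of_nonneg (r := 27 ^ r * _) (by positivity)]
  calc (3 * r).descFactorial k * ‖x‖ ^ (3 * r - k) / (27 ^ r * (r ! : ℝ) ^ 3)
      ≤ k ! * 2 ^ (3 * r) * R ^ (3 * r) / (27 ^ r * r !) := by
        gcongr
    _ = k ! * ((8 * R ^ 3 / 27) ^ r / r !) := by
        rw [pow_mul, pow_mul, div_pow, mul_pow]
        field_simp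
        norm_num

lemma summable_iteratedDeriv_remod3Term (k : ℕ) (x : ℝ) :
    Summable fun r ↦ iteratedDeriv k (remod3Term r) x :=
  ((Real.summable_pow_div_factorial _).mul_left _).of_norm_bounded fun r ↦
    norm_iteratedDeriv_remod3Term_le k r (le_max_right ‖x‖ 1) (le_max_left ‖x‖ 1)

lemma iteratedDeriv_remod3 (k : ℕ) (x : ℝ) :
    iteratedDeriv k remod3 x = ∑' r, iteratedDeriv k (remod3Term r) x := by
  refine iteratedDeriv_tsum_of_norm_le (f := remod3Term) k (fun r ↦ ?_) (fun j _ R ↦ ?_) x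
  · rw [remod3Term_eq]
    fun_prop
  · exact ⟨_, (Real.summable_pow_div_factorial _).mul_left _, fun r y hy ↦
      norm_iteratedDeriv_remod3Term_le j r (le_max_right R 1) (hy.trans (le_max_left R 1))⟩

noncomputable def remodBesselOp (f : ℝ → ℝ) (x : ℝ) : ℝ :=
  x ^ 2 * iteratedDeriv 3 f x + 3 * x * iteratedDeriv 2 f x + deriv f x

lemma remodBesselOp_pow (n : ℕ) (x : ℝ) : remodBesselOp (· ^ n) x = n ^ 3 * x ^ (n - 1) := by
  rw [remodBesselOp, iteratedDeriv_pow, iteratedDeriv_pow, deriv_pow_field]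
  rcases n with _ | _ | _ | n <;> simp [Nat.descFactorial] <;> ring

lemma remodBesselOp_div_const (f : ℝ → ℝ) (c x : ℝ) :
    remodBesselOp (fun y ↦ f y / c) x = remodBesselOp f x / c := by
  simp only [remodBesselOp, iteratedDeriv_div_const, deriv_div_const]
  ring

lemma remodBesselOp_remod3Term_zero (x : ℝ) : remodBesselOp (remod3Term 0) x = 0 := by
  rw [remod3Term_eq, remodBesselOp_div_const, remodBesselOp_pow]
  simp

lemma remodBesselOp_remod3Term_succ (s : ℕ) (x : ℝ) :
    remodBesselOp (remod3Term (s + 1)) x = x ^ 2 * remod3Term s x := by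
  rw [remod3Term_eq, remod3Term_eq, remodBesselOp_div_const, remodBesselOp_pow,
    show 3 * (s + 1) - 1 = 3 * s + 2 by omega, Nat.factorial_succ]
  push_cast
  field_simp
  ring

lemma hasSum_remodBesselOp_remod3Term (x : ℝ) :
    HasSum (fun r ↦ remodBesselOp (remod3Term r) x) (remodBesselOp remod3 x) := by
  have h k := (summable_iteratedDeriv_remod3Term k x).hasSum
  simp only [← iteratedDeriv_remod3] at h
  simpa only [remodBesselOp, ← iteratedDeriv_one] using
    (((h 3).mul_left (x ^ 2)).add ((h 2).mul_left (3 * x))).add (h 1)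

theorem remod3_ode (x : ℝ) :
    x ^ 2 * iteratedDeriv 3 remod3 x + 3 * x * iteratedDeriv 2 remod3 x
      + deriv remod3 x - x ^ 2 * remod3 x = 0 := by
  have h := (hasSum_nat_add_iff' 1).mpr (hasSum_remodBesselOp_remod3Term x)
  simp only [Finset.sum_range_one, remodBesselOp_remod3Term_zero, sub_zero,
    remodBesselOp_remod3Term_succ] at h
  have hsum := (summable_iteratedDeriv_remod3Term 0 x).hasSum.mul_left (x ^ 2)
  simp only [iteratedDeriv_zero] at hsum
  exact sub_eq_zero.mpr (h.unique hsum)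
end

section
/- For β > 1, the Laplace-type integral ∫_0^∞ I_{0,0}(−x)·e^{−βx} dx = (1/β)·J_0(2/√β), where J_0 is the Bessel function of the first kind of order zero. -/
/-!
Expand `I₀,₀(-x)` in its power series and integrate term by term against `e^{-βx}`: since
`∫₀^∞ xⁿ e^{-βx} dx = n!/βⁿ⁺¹`, the `n`-th term becomes `(-1)ⁿ/((n!)² βⁿ⁺¹)`, which is the `n`-th
term of `β⁻¹ J₀(2/√β)`. Termwise integration is legitimate because the integrals of the absolute
values, `1/((n!)² βⁿ⁺¹)`, are summable.
-/

/-- Two-index Humbert-Bessel function with zero indices. -/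
noncomputable def humbert00 (x : ℝ) : ℝ := ∑' r : ℕ, x ^ r / (r.factorial : ℝ) ^ 3

/-- The Bessel function of the first kind of order 0. -/
noncomputable def besselJ0 (x : ℝ) : ℝ :=
  ∑' r : ℕ, (-1 : ℝ) ^ r * x ^ (2 * r) / (2 ^ (2 * r) * (r.factorial : ℝ) ^ 2)

open MeasureTheory Set Real Nat

lemma integrableOn_pow_mul_exp_neg_mul (n : ℕ) {β : ℝ} (hβ : 0 < β) :
    IntegrableOn (fun x : ℝ => x ^ n * exp (-(β * x))) (Ioi 0) := by
  refine (integrableOn_rpow_mul_exp_neg_mul_rpow (p := 1) (s := n)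
    (by linarith [n.cast_nonneg (α := ℝ)]) one_pos hβ).congr_fun (fun x _ => ?_) measurableSet_Ioi
  simp only [rpow_natCast, rpow_one, neg_mul]

lemma integral_pow_mul_exp_neg_mul_Ioi (n : ℕ) {β : ℝ} (hβ : 0 < β) :
    ∫ x in Ioi 0, x ^ n * exp (-(β * x)) = n ! / β ^ (n + 1) := by
  have h := integral_rpow_mul_exp_neg_mul_Ioi (a := n + 1) (by positivity) hβ
  rw [add_sub_cancel_right, Gamma_nat_eq_factorial, ← Nat.cast_succ] at h
  simp only [rpow_natCast] at h
  rw [h, div_pow, one_pow, one_div_mul_eq_div]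

theorem integral_tsum_mul_pow_mul_exp_neg_mul_Ioi {c : ℕ → ℝ} {β : ℝ} (hβ : 0 < β)
    (hc : Summable fun n => |c n| * n ! / β ^ (n + 1)) :
    ∫ x in Ioi 0, (∑' n, c n * x ^ n) * exp (-(β * x)) = ∑' n, c n * n ! / β ^ (n + 1) := by
  set F : ℕ → ℝ → ℝ := fun n x => c n * (x ^ n * exp (-(β * x)))
  have hF_int (n : ℕ) : IntegrableOn (F n) (Ioi 0) :=
    (integrableOn_pow_mul_exp_neg_mul n hβ).const_mul (c n)
  have hF (n : ℕ) : ∫ x in Ioi 0, F n x = c n * n ! / β ^ (n + 1) := by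
    rw [integral_const_mul, integral_pow_mul_exp_neg_mul_Ioi n hβ, mul_div_assoc]
  have hF_norm (n : ℕ) : ∫ x in Ioi 0, ‖F n x‖ = |c n| * n ! / β ^ (n + 1) := by
    have hnorm : ∀ x ∈ Ioi (0 : ℝ), ‖F n x‖ = |c n| * (x ^ n * exp (-(β * x))) := fun x hx => by
      simp only [F, norm_mul, norm_pow, norm_eq_abs, abs_of_pos (mem_Ioi.mp hx), abs_exp]
    rw [setIntegral_congr_fun measurableSet_Ioi hnorm, integral_const_mul,
      integral_pow_mul_exp_neg_mul_Ioi n hβ, mul_div_assoc]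
  calc ∫ x in Ioi 0, (∑' n, c n * x ^ n) * exp (-(β * x))
      = ∫ x in Ioi 0, ∑' n, F n x := by simp only [F, ← tsum_mul_right, mul_assoc]
    _ = ∑' n, c n * n ! / β ^ (n + 1) := by
      rw [← integral_tsum_of_summable_integral_norm hF_int (by simpa only [hF_norm] using hc)]
      simp only [hF]

lemma humbert00_neg (x : ℝ) : humbert00 (-x) = ∑' n : ℕ, (-1) ^ n / (n ! : ℝ) ^ 3 * x ^ n := by
  refine tsum_congr fun n => ?_
  rw [neg_pow]
  ring

lemma besselJ0_eq_tsum (x : ℝ) : besselJ0 x = ∑' n : ℕ, (-(x ^ 2 / 4)) ^ n / (n ! : ℝ) ^ 2 := by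
  refine tsum_congr fun n => ?_
  rw [neg_pow (x ^ 2 / 4), div_pow, ← pow_mul, pow_mul (2 : ℝ) 2]
  ring

lemma summable_pow_div_factorial_sq (x : ℝ) : Summable fun n : ℕ => x ^ n / (n ! : ℝ) ^ 2 := by
  refine (summable_pow_div_factorial |x|).of_norm_bounded fun n => ?_
  rw [norm_div, norm_pow, norm_pow, norm_eq_abs, norm_eq_abs, Nat.abs_cast]
  have : (1 : ℝ) ≤ n ! := mod_cast n.factorial_pos
  gcongr
  nlinarith

theorem humbert_laplace_integral (β : ℝ) (hβ : 1 < β) :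
    ∫ x in Set.Ioi (0 : ℝ), humbert00 (-x) * Real.exp (-β * x) =
      (1 / β) * besselJ0 (2 / Real.sqrt β) := by
  have hβ0 : 0 < β := one_pos.trans hβ
  have hcoeff (n : ℕ) :
      (-1 : ℝ) ^ n / n ! ^ 3 * n ! / β ^ (n + 1) = β⁻¹ * ((-β⁻¹) ^ n / n ! ^ 2) := by
    rw [neg_pow β⁻¹, inv_pow]
    field_simp
    ring
  have habs (n : ℕ) :
      |(-1 : ℝ) ^ n / n ! ^ 3| * n ! / β ^ (n + 1) = β⁻¹ * (β⁻¹ ^ n / n ! ^ 2) := by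
    rw [abs_div, abs_pow, abs_neg, abs_one, one_pow, abs_pow, Nat.abs_cast, inv_pow]
    field_simp
    ring
  have harg : (2 / √β) ^ 2 / 4 = β⁻¹ := by
    rw [div_pow, sq_sqrt hβ0.le]
    ring
  simp_rw [humbert00_neg, neg_mul]
  rw [integral_tsum_mul_pow_mul_exp_neg_mul_Ioi hβ0
    (by simpa only [habs] using (summable_pow_div_factorial_sq β⁻¹).mul_left β⁻¹)]
  simp_rw [hcoeff, tsum_mul_left, besselJ0_eq_tsum, harg, one_div]
end

section
/- For β > 0, the Gaussian integral ∫_{−∞}^{∞} I_{0,0}(x)·e^{−βx²} dx = √(π/β) · ∑_{r=0}^∞ (1/(4β))^r / (r!·Γ(2r+1)²). -/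
/-!
Expand `humbert00 x * exp (-β x²)` as a power series and integrate term by term; this is legitimate
because `|x| ^ r ≤ 1 + x ^ (2 r)` bounds the absolute moments by even ones, whose growth is killed
by the `(r!)³` in the denominators. Odd moments of the Gaussian vanish, and by Legendre's
duplication formula the `2m`-th moment is `(2m)! / (4 ^ m m! β ^ m) · √(π / β)`, which turns the
`r = 2m` term into the `m`-th term of the right-hand side.
-/

open MeasureTheory Real Set Nat

theorem Real.Gamma_nat_add_half_eq_factorial (m : ℕ) :
    Gamma (m + 1 / 2) = (2 * m)! / (4 ^ m * m !) * √π := by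
  have h := Gamma_mul_Gamma_add_half (m + 1 / 2)
  rw [add_assoc, add_halves, Gamma_nat_eq_factorial,
    show 2 * ((m : ℝ) + 1 / 2) = (2 * m : ℕ) + 1 by push_cast; ring, Gamma_nat_eq_factorial,
    show 1 - ((2 * m : ℕ) + 1 : ℝ) = -(2 * m : ℕ) by ring, rpow_neg zero_le_two, rpow_natCast,
    pow_mul] at h
  rw [div_mul_eq_mul_div, eq_div_iff (by positivity), mul_comm (4 ^ m : ℝ), ← mul_assoc, h]
  field_simp
  norm_num

theorem Nat.factorial_two_mul_le_four_pow_mul_sq (n : ℕ) : (2 * n)! ≤ 4 ^ n * n ! ^ 2 := by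
  rw [← choose_mul_factorial_mul_factorial (le_mul_of_one_le_left' one_le_two),
    two_mul, add_tsub_cancel_right, ← two_mul, ← centralBinom_eq_two_mul_choose, mul_assoc, sq]
  exact Nat.mul_le_mul_right _ (centralBinom_le_four_pow n)

section GaussianMoments

variable {b : ℝ}

theorem integrable_pow_mul_exp_neg_mul_sq (hb : 0 < b) (n : ℕ) :
    Integrable fun x : ℝ => x ^ n * exp (-b * x ^ 2) := by
  simpa [rpow_natCast] using
    integrable_rpow_mul_exp_neg_mul_sq hb (neg_one_lt_zero.trans_le n.cast_nonneg)

theorem integral_pow_mul_exp_neg_mul_sq_of_odd {n : ℕ} (hn : Odd n) (b : ℝ) :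
    ∫ x : ℝ, x ^ n * exp (-b * x ^ 2) = 0 := by
  have h := integral_neg_eq_self (fun x : ℝ => x ^ n * exp (-b * x ^ 2)) volume
  simp only [neg_sq, hn.neg_pow, neg_mul, integral_neg] at h ⊢
  linarith

theorem integral_pow_two_mul_mul_exp_neg_mul_sq (hb : 0 < b) (m : ℕ) :
    ∫ x : ℝ, x ^ (2 * m) * exp (-b * x ^ 2) = (2 * m)! / (4 ^ m * m ! * b ^ m) * √(π / b) := by
  have h_abs : ∫ x : ℝ, x ^ (2 * m) * exp (-b * x ^ 2) =
      ∫ x : ℝ, |x| ^ ((2 * m : ℕ) : ℝ) * exp (-b * |x| ^ (2 : ℝ)) := by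
    simp only [rpow_two, rpow_natCast, sq_abs, (even_two_mul m).pow_abs]
  have hq : (-1 : ℝ) < (2 * m : ℕ) := neg_one_lt_zero.trans_le (Nat.cast_nonneg _)
  rw [h_abs, integral_comp_abs (f := fun x => x ^ ((2 * m : ℕ) : ℝ) * exp (-b * x ^ (2 : ℝ))),
    integral_rpow_mul_exp_neg_mul_rpow two_pos hq hb,
    show ((2 * m : ℕ) + 1 : ℝ) / 2 = m + 1 / 2 by push_cast; ring, Gamma_nat_add_half_eq_factorial,
    show -((2 * m : ℕ) + 1 : ℝ) / 2 = -m + -(1 / 2) by push_cast; ring, rpow_add hb,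
    rpow_neg hb.le, rpow_neg hb.le, rpow_natCast, ← sqrt_eq_rpow, sqrt_div' _ hb.le]
  field_simp

theorem integral_abs_pow_mul_exp_neg_mul_sq_le (hb : 0 < b) (n : ℕ) :
    ∫ x : ℝ, |x| ^ n * exp (-b * x ^ 2) ≤ √(π / b) * (1 + n ! / b ^ n) := by
  have h_dom : ∀ x : ℝ, |x| ^ n ≤ 1 + x ^ (2 * n) := fun x => by
    rw [← (even_two_mul n).pow_abs, pow_mul']
    rcases le_total |x| 1 with hx | hx
    · nlinarith [pow_le_one₀ (abs_nonneg x) hx (n := n), pow_nonneg (abs_nonneg x) n]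
    · nlinarith [one_le_pow₀ hx (n := n)]
  have h_int := (integrable_exp_neg_mul_sq hb).add (integrable_pow_mul_exp_neg_mul_sq hb (2 * n))
  have h_fact : ((2 * n)! : ℝ) / (4 ^ n * n ! * b ^ n) ≤ n ! / b ^ n := by
    rw [div_le_div_iff₀ (by positivity) (by positivity)]
    have := (Nat.cast_le (α := ℝ)).2 (factorial_two_mul_le_four_pow_mul_sq n)
    push_cast at this
    have : (0 : ℝ) < b ^ n := by positivity
    nlinarith
  calc ∫ x : ℝ, |x| ^ n * exp (-b * x ^ 2)
      ≤ ∫ x : ℝ, exp (-b * x ^ 2) + x ^ (2 * n) * exp (-b * x ^ 2) := by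
        refine integral_mono_of_nonneg (.of_forall fun x => by positivity) h_int
          (.of_forall fun x => ?_)
        have := mul_le_mul_of_nonneg_right (h_dom x) (exp_pos (-b * x ^ 2)).le
        linarith
    _ = √(π / b) * (1 + (2 * n)! / (4 ^ n * n ! * b ^ n)) := by
        rw [integral_add (integrable_exp_neg_mul_sq hb) (integrable_pow_mul_exp_neg_mul_sq hb _),
          integral_gaussian, integral_pow_two_mul_mul_exp_neg_mul_sq hb]
        ring
    _ ≤ √(π / b) * (1 + n ! / b ^ n) := by gcongr

end GaussianMoments

theorem humbert00_mul_exp_eq_tsum (β x : ℝ) :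
    humbert00 x * exp (-β * x ^ 2) = ∑' r : ℕ, x ^ r * exp (-β * x ^ 2) / (r ! : ℝ) ^ 3 := by
  simp only [humbert00, ← tsum_mul_right, div_mul_eq_mul_div]

theorem summable_integral_norm_pow_mul_exp_div_factorial_pow_three {β : ℝ} (hβ : 0 < β) :
    Summable fun r : ℕ => ∫ x : ℝ, ‖x ^ r * exp (-β * x ^ 2) / (r ! : ℝ) ^ 3‖ := by
  have h_norm (r : ℕ) : ∫ x : ℝ, ‖x ^ r * exp (-β * x ^ 2) / (r ! : ℝ) ^ 3‖ =
      (∫ x : ℝ, |x| ^ r * exp (-β * x ^ 2)) / (r ! : ℝ) ^ 3 := by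
    rw [← integral_div]
    simp only [norm_div, norm_mul, norm_pow, norm_eq_abs, abs_exp, Nat.abs_cast]
  have h_fact (r : ℕ) : (1 : ℝ) ≤ r ! := by exact_mod_cast r.factorial_pos
  refine .of_nonneg_of_le (fun r => integral_nonneg fun x => norm_nonneg _) (fun r => ?_)
    (((summable_pow_div_factorial 1).add (summable_pow_div_factorial β⁻¹)).mul_left √(π / β))
  rw [h_norm]
  calc (∫ x : ℝ, |x| ^ r * exp (-β * x ^ 2)) / (r ! : ℝ) ^ 3
      ≤ √(π / β) * (1 + r ! / β ^ r) / (r ! : ℝ) ^ 3 := by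
        gcongr; exact integral_abs_pow_mul_exp_neg_mul_sq_le hβ r
    _ = √(π / β) * (1 ^ r / (r ! : ℝ) ^ 3 + β⁻¹ ^ r / (r ! : ℝ) ^ 2) := by
        rw [one_pow, inv_pow]
        field_simp
    _ ≤ √(π / β) * (1 ^ r / r ! + β⁻¹ ^ r / r !) := by
        gcongr <;> exact le_self_pow₀ (h_fact r) (by norm_num)

theorem humbert_gaussian_integral (β : ℝ) (hβ : 0 < β) :
    ∫ x : ℝ, humbert00 x * Real.exp (-β * x ^ 2) =
      Real.sqrt (Real.pi / β) *
        ∑' r : ℕ, (1 / (4 * β)) ^ r /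
          ((r.factorial : ℝ) * Real.Gamma (2 * r + 1) ^ 2) := by
  have h_int (r : ℕ) : Integrable fun x : ℝ => x ^ r * exp (-β * x ^ 2) / (r ! : ℝ) ^ 3 :=
    (integrable_pow_mul_exp_neg_mul_sq hβ r).div_const _
  have h_odd : (Function.support fun r : ℕ => (∫ x : ℝ, x ^ r * exp (-β * x ^ 2)) / (r ! : ℝ) ^ 3)
      ⊆ range (2 * ·) := by
    intro r hr
    obtain ⟨m, rfl | rfl⟩ := r.even_or_odd'
    · exact ⟨m, rfl⟩
    · simp only [Function.mem_support, ne_eq, zero_div, not_true_eq_false,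
        integral_pow_mul_exp_neg_mul_sq_of_odd (odd_two_mul_add_one m)] at hr
  calc ∫ x : ℝ, humbert00 x * exp (-β * x ^ 2)
      = ∫ x : ℝ, ∑' r : ℕ, x ^ r * exp (-β * x ^ 2) / (r ! : ℝ) ^ 3 := by
        simp only [humbert00_mul_exp_eq_tsum]
    _ = ∑' r : ℕ, (∫ x : ℝ, x ^ r * exp (-β * x ^ 2)) / (r ! : ℝ) ^ 3 := by
        rw [← integral_tsum_of_summable_integral_norm h_int
          (summable_integral_norm_pow_mul_exp_div_factorial_pow_three hβ)]
        simp only [integral_div]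
    _ = ∑' m : ℕ, (∫ x : ℝ, x ^ (2 * m) * exp (-β * x ^ 2)) / ((2 * m)! : ℝ) ^ 3 :=
        ((mul_right_injective₀ two_ne_zero).tsum_eq h_odd).symm
    _ = ∑' m : ℕ, √(π / β) * ((1 / (4 * β)) ^ m / (m ! * Gamma (2 * m + 1) ^ 2)) := by
        refine tsum_congr fun m => ?_
        rw [integral_pow_two_mul_mul_exp_neg_mul_sq hβ, show (2 * m + 1 : ℝ) = (2 * m : ℕ) + 1 by
          push_cast; ring, Gamma_nat_eq_factorial, div_pow, one_pow, mul_pow]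
        field_simp
    _ = _ := tsum_mul_left
end
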